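/- For a linear map φ: V → W and a Dirac structure L_W on W, the backward image Bφ(L_W) = {X + φ*ξ | X ∈ V, ξ ∈ W*, φ(X) + ξ ∈ L_W} is a Dirac structure (maximal isotropic subspace) on V. -/

import Mathlib

open Module LinearMap

/-- The symmetric pairing `⟨X+ξ, Y+η⟩ = (ξ(Y) + η(X))/2` on `U ⊕ U*`. -/
noncomputable def pair (U : Type) [AddCommGroup U] [Module ℝ U] :
    LinearMap.BilinForm ℝ (U × Module.Dual ℝ U) :=
  LinearMap.mk₂ ℝ (fun u v => (u.2 v.1 + v.2 u.1) / 2)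
    (by intro m₁ m₂ n; simp; ring)
    (by intro c m n; simp [smul_eq_mul]; ring)
    (by intro m n₁ n₂; simp; ring)
    (by intro c m n; simp [smul_eq_mul]; ring)

/-- The backward image `Bφ(S) = {X + φ*ξ | X ∈ V, ξ ∈ W*, φ(X) + ξ ∈ S}`. -/
def bimg {V W : Type} [AddCommGroup V] [Module ℝ V] [AddCommGroup W] [Module ℝ W]
    (φ : V →ₗ[ℝ] W) (S : Set (W × Module.Dual ℝ W)) : Set (V × Module.Dual ℝ V) :=
  {p | ∃ ξ : Module.Dual ℝ W, p.2 = φ.dualMap ξ ∧ (φ p.1, ξ) ∈ S}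

lemma pair_apply (U : Type) [AddCommGroup U] [Module ℝ U]
    (u v : U × Module.Dual ℝ U) : pair U u v = (u.2 v.1 + v.2 u.1) / 2 := rfl

/-- Rank-nullity for the image of a submodule. -/
lemma finrank_map_add_finrank_inf_ker {M N : Type} [AddCommGroup M] [Module ℝ M]
    [AddCommGroup N] [Module ℝ N] [FiniteDimensional ℝ M]
    (f : M →ₗ[ℝ] N) (p : Submodule ℝ M) :
    finrank ℝ (p.map f) + finrank ℝ ((LinearMap.ker f ⊓ p : Submodule ℝ M))
      = finrank ℝ p := by
  have h := LinearMap.finrank_range_add_finrank_ker (f.comp p.subtype)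
  rw [LinearMap.range_comp, Submodule.range_subtype, LinearMap.ker_comp] at h
  have h2 : finrank ℝ (Submodule.comap p.subtype (LinearMap.ker f))
      = finrank ℝ ((LinearMap.ker f ⊓ p : Submodule ℝ M)) := by
    rw [← Submodule.finrank_map_subtype_eq p, Submodule.map_comap_subtype, inf_comm]
  rw [h2] at h
  exact h

lemma orthogonal_sup {M : Type} [AddCommGroup M] [Module ℝ M]
    (B : LinearMap.BilinForm ℝ M) (p q : Submodule ℝ M) :
    B.orthogonal (p ⊔ q) = B.orthogonal p ⊓ B.orthogonal q := by
  ext x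
  simp only [Submodule.mem_inf, LinearMap.BilinForm.mem_orthogonal_iff]
  constructor
  · exact fun h => ⟨fun n hn => h n (Submodule.mem_sup_left hn),
      fun n hn => h n (Submodule.mem_sup_right hn)⟩
  · rintro ⟨h1, h2⟩ n hn
    obtain ⟨y, hy, z, hz, rfl⟩ := Submodule.mem_sup.mp hn
    have hy' := h1 y hy
    have hz' := h2 z hz
    rw [map_add, LinearMap.add_apply, hy', hz', add_zero]

set_option maxHeartbeats 1000000 in
/-- For a linear map `φ : V → W` and a Dirac structure (maximal isotropic
subspace) `L_W` on `W`, the backward image `Bφ(L_W)` is a Dirac structure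
on `V`. -/
theorem backward_image_is_dirac
    (V W : Type) [AddCommGroup V] [Module ℝ V] [FiniteDimensional ℝ V]
    [AddCommGroup W] [Module ℝ W] [FiniteDimensional ℝ W]
    (φ : V →ₗ[ℝ] W) (LW : Submodule ℝ (W × Module.Dual ℝ W))
    (hiso : ∀ u ∈ LW, ∀ v ∈ LW, pair W u v = 0)
    (hdim : finrank ℝ LW = finrank ℝ W) :
    ∃ L : Submodule ℝ (V × Module.Dual ℝ V),
      (L : Set (V × Module.Dual ℝ V)) = bimg φ (LW : Set (W × Module.Dual ℝ W)) ∧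
      (∀ u ∈ L, ∀ v ∈ L, pair V u v = 0) ∧
      finrank ℝ L = finrank ℝ V := by
  classical
  set F : Submodule ℝ W := LinearMap.range φ with hF
  set Fa : Submodule ℝ (Module.Dual ℝ W) := F.dualAnnihilator with hFa
  set Φ : V × Module.Dual ℝ W →ₗ[ℝ] W × Module.Dual ℝ W :=
    φ.prodMap (LinearMap.id) with hΦ
  set Ψ : V × Module.Dual ℝ W →ₗ[ℝ] V × Module.Dual ℝ V :=
    (LinearMap.id).prodMap φ.dualMap with hΨ
  set K : Submodule ℝ (V × Module.Dual ℝ W) := LW.comap Φ with hK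
  refine ⟨K.map Ψ, ?_, ?_, ?_⟩
  · ext p
    constructor
    · rintro ⟨⟨X, ξ⟩, hmem, rfl⟩
      exact ⟨ξ, rfl, hmem⟩
    · rintro ⟨ξ, h1, h2⟩
      refine ⟨(p.1, ξ), h2, ?_⟩
      simp [hΨ, LinearMap.prodMap_apply, ← h1]
  · rintro u ⟨⟨X, ξ⟩, hu, rfl⟩ v ⟨⟨Y, η⟩, hv, rfl⟩
    have := hiso _ hu _ hv
    simpa [pair_apply, hΦ, hΨ] using this
  · -- dimension count
    set B : LinearMap.BilinForm ℝ (W × Module.Dual ℝ W) := pair W with hB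
    have hrefl : B.IsRefl := by
      intro x y h
      rw [hB, pair_apply] at h ⊢
      linarith
    have hnd : B.Nondegenerate := by
      refine (LinearMap.IsRefl.nondegenerate_iff_separatingLeft hrefl).mpr ?_
      intro x hx
      have h1 : x.2 = 0 := by
        ext v
        have := hx (v, 0)
        rw [hB, pair_apply] at this
        simp at this
        simpa using this
      have h2 : x.1 = 0 := by
        rw [← Module.forall_dual_apply_eq_zero_iff ℝ x.1]
        intro β
        have := hx (0, β)
        rw [hB, pair_apply] at this
        simp [h1] at this
        simpa using this
      exact Prod.ext h2 h1
    have hWW : finrank ℝ (W × Module.Dual ℝ W) = 2 * finrank ℝ W := by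
      rw [Module.finrank_prod, Subspace.dual_finrank_eq]; ring
    -- LW is its own orthogonal
    have hLWle : LW ≤ B.orthogonal LW := fun x hx n hn => hiso n hn x hx
    have hdimorth := LinearMap.BilinForm.finrank_add_finrank_orthogonal hrefl (B := B) LW
    rw [B.orthogonal_top_eq_bot hnd, inf_bot_eq, finrank_bot, add_zero, hWW, hdim] at hdimorth
    have hLWorth : LW = B.orthogonal LW := by
      refine Submodule.eq_of_le_of_finrank_le hLWle ?_
      omega
    -- S1 = {0} × Fa
    set S1 : Submodule ℝ (W × Module.Dual ℝ W) := Submodule.prod ⊥ Fa with hS1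
    have horthS1 : B.orthogonal S1 = Submodule.prod F ⊤ := by
      ext x
      simp only [LinearMap.BilinForm.mem_orthogonal_iff, Submodule.mem_prod,
        Submodule.mem_bot, Submodule.mem_top, and_true, hS1]
      constructor
      · intro h
        rw [← Subspace.dualAnnihilator_dualCoannihilator_eq (W := F)]
        rw [Submodule.mem_dualCoannihilator]
        intro β hβ
        have := h (0, β) ⟨rfl, hβ⟩
        rw [hB, pair_apply] at this
        simp at this
        linarith
      · rintro hx n ⟨hn1, hn2⟩
        rw [hB, pair_apply, hn1]
        have : n.2 x.1 = 0 := by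
          rw [hFa] at hn2
          exact (Submodule.mem_dualAnnihilator n.2).mp hn2 x.1 hx
        simp [this]
    -- key orthogonality dimension count
    have hkey := LinearMap.BilinForm.finrank_add_finrank_orthogonal hrefl (B := B) (S1 ⊔ LW)
    rw [B.orthogonal_top_eq_bot hnd, inf_bot_eq, finrank_bot, add_zero, hWW,
      orthogonal_sup, horthS1, ← hLWorth] at hkey
    have hsupinf := Submodule.finrank_sup_add_finrank_inf_eq S1 LW
    -- finrank S1 = finrank Fa
    have hS1rank : finrank ℝ S1 = finrank ℝ Fa := by
      rw [hS1, ← Submodule.map_inr]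
      exact (LinearEquiv.finrank_eq
        (Submodule.equivMapOfInjective (LinearMap.inr ℝ W (Module.Dual ℝ W))
          LinearMap.inr_injective Fa)).symm
    -- finrank Fa + finrank F = finrank W
    have hFaF : finrank ℝ Fa + finrank ℝ F = finrank ℝ W := by
      have := Subspace.finrank_add_finrank_dualCoannihilator_eq Fa
      rwa [hFa, Subspace.dualAnnihilator_dualCoannihilator_eq] at this
    -- K computations
    have hkerΦ : LinearMap.ker Φ = (LinearMap.ker φ).prod ⊥ := by
      rw [hΦ, LinearMap.ker_prodMap, LinearMap.ker_id]
    have hkerΨ : LinearMap.ker Ψ = Submodule.prod ⊥ Fa := by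
      rw [hΨ, LinearMap.ker_prodMap, LinearMap.ker_id,
        LinearMap.ker_dualMap_eq_dualAnnihilator_range, hFa, hF]
    have hrangeΦ : LinearMap.range Φ = Submodule.prod F ⊤ := by
      ext y
      constructor
      · rintro ⟨x, rfl⟩
        exact ⟨⟨x.1, rfl⟩, trivial⟩
      · rintro ⟨⟨x1, hx1⟩, -⟩
        exact ⟨(x1, y.2), by simp [hΦ, Prod.ext_iff, hx1]⟩
    have hmapK : K.map Φ = (Submodule.prod F ⊤) ⊓ LW := by
      rw [hK, Submodule.map_comap_eq, hrangeΦ]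
    have hkerle : LinearMap.ker Φ ⊓ K = LinearMap.ker Φ := by
      rw [inf_eq_left]
      intro x hx
      rw [hK, Submodule.mem_comap]
      rw [LinearMap.mem_ker] at hx
      rw [hx]
      exact LW.zero_mem
    have hkerΦrank : finrank ℝ (LinearMap.ker Φ) = finrank ℝ (LinearMap.ker φ) := by
      rw [hkerΦ, ← Submodule.map_inl]
      exact (LinearEquiv.finrank_eq
        (Submodule.equivMapOfInjective (LinearMap.inl ℝ V (Module.Dual ℝ W))
          LinearMap.inl_injective (LinearMap.ker φ))).symm
    have hKrank := finrank_map_add_finrank_inf_ker Φ K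
    rw [hmapK, hkerle, hkerΦrank] at hKrank
    -- L computations
    have hLrank := finrank_map_add_finrank_inf_ker Ψ K
    -- identify ker Ψ ⊓ K with S1 ⊓ LW via Φ
    have hmapinf : (LinearMap.ker Ψ ⊓ K).map Φ = S1 ⊓ LW := by
      ext y
      constructor
      · rintro ⟨x, ⟨hx1, hx2⟩, rfl⟩
        rw [hkerΨ] at hx1
        obtain ⟨hx11, hx12⟩ := hx1
        simp only [SetLike.mem_coe, Submodule.mem_bot] at hx11
        constructor
        · rw [hS1]
          refine ⟨?_, hx12⟩
          simp [hΦ, hx11]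
        · exact hx2
      · rintro ⟨hy1, hy2⟩
        rw [hS1] at hy1
        obtain ⟨hy11, hy12⟩ := hy1
        simp only [SetLike.mem_coe, Submodule.mem_bot] at hy11
        refine ⟨(0, y.2), ⟨?_, ?_⟩, ?_⟩
        · rw [hkerΨ]; exact ⟨Submodule.zero_mem _, hy12⟩
        · have h0 : Φ (0, y.2) = y := by
            rw [hΦ]
            exact Prod.ext (by simpa using hy11.symm) rfl
          show Φ (0, y.2) ∈ LW
          rw [h0]; exact hy2
        · rw [hΦ]
          exact Prod.ext (by simpa using hy11.symm) rfl
    have hinfbot : LinearMap.ker Φ ⊓ (LinearMap.ker Ψ ⊓ K) = ⊥ := by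
      rw [eq_bot_iff]
      rintro x ⟨hx1, hx2, _⟩
      rw [hkerΦ] at hx1
      rw [hkerΨ] at hx2
      obtain ⟨_, hx12⟩ := hx1
      obtain ⟨hx21, _⟩ := hx2
      simp only [SetLike.mem_coe, Submodule.mem_bot] at hx12 hx21
      rw [Submodule.mem_bot]
      exact Prod.ext hx21 hx12
    have hd := finrank_map_add_finrank_inf_ker Φ (LinearMap.ker Ψ ⊓ K)
    rw [hmapinf, hinfbot, finrank_bot, add_zero] at hd
    -- rank nullity for φ
    have hφ := LinearMap.finrank_range_add_finrank_ker φ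
    rw [← hF] at hφ
    omega
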